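/- Every Tychonoff P-space is sequentially Ascoli, i.e., every sequence of continuous real-valued functions converging in the compact-open topology is equicontinuous. -/

import Mathlib

/-!
In a P-space every countable intersection of neighbourhoods of a point is again a neighbourhood
(pass to interiors). Equicontinuity of a countable family at `x` asks exactly that the countably
many neighbourhoods `{y | dist (fₙ x) (fₙ y) < ε}` have a common neighbourhood, so every countable
family of continuous functions on a P-space is equicontinuous.
-/

open Filter Set Topology

theorem countableInterFilter_nhds_of_isOpen_iInter {X : Type*} [TopologicalSpace X]
    (hP : ∀ s : ℕ → Set X, (∀ n, IsOpen (s n)) → IsOpen (⋂ n, s n)) (x : X) :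
    CountableInterFilter (𝓝 x) := by
  refine ⟨fun S hS hmem => ?_⟩
  rcases S.eq_empty_or_nonempty with rfl | hne
  · simp
  obtain ⟨s, rfl⟩ := hS.exists_eq_range hne
  rw [sInter_range]
  have hx : x ∈ ⋂ n, interior (s n) :=
    mem_iInter.2 fun n => mem_interior_iff_mem_nhds.2 (hmem _ ⟨n, rfl⟩)
  exact mem_of_superset ((hP _ fun _ => isOpen_interior).mem_nhds hx)
    (iInter_mono fun _ => interior_subset)

theorem equicontinuous_of_countableInterFilter_nhds {ι X α : Type*} [Countable ι]
    [TopologicalSpace X] [UniformSpace α] [∀ x : X, CountableInterFilter (𝓝 x)]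
    {F : ι → X → α} (hF : ∀ i, Continuous (F i)) : Equicontinuous F :=
  fun x _ hU => eventually_countable_forall.2 fun i =>
    (hF i).continuousAt (mem_nhds_left (F i x) hU)

theorem stmt_4_general {X : Type*} [TopologicalSpace X]
    (hP : ∀ s : ℕ → Set X, (∀ n, IsOpen (s n)) → IsOpen (⋂ n, s n))
    (f : ℕ → C(X, ℝ)) :
    Equicontinuous (fun n => (f n : X → ℝ)) :=
  have := countableInterFilter_nhds_of_isOpen_iInter hP
  equicontinuous_of_countableInterFilter_nhds fun n => (f n).continuous

/-- Every Tychonoff P-space is sequentially Ascoli: every sequence of continuous real-valued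
functions converging in the compact-open topology is equicontinuous. -/
theorem stmt_4 {X : Type*} [TopologicalSpace X] [T2Space X] [CompletelyRegularSpace X]
    (hP : ∀ s : ℕ → Set X, (∀ n, IsOpen (s n)) → IsOpen (⋂ n, s n))
    (f : ℕ → C(X, ℝ)) (g : C(X, ℝ)) (hf : Filter.Tendsto f Filter.atTop (nhds g)) :
    Equicontinuous (fun n => (f n : X → ℝ)) :=
  stmt_4_general hP f
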